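/- (Krawczyk existence) Let n be a natural number and let F : (Fin n → ℝ) → (Fin n → ℝ) be differentiable. Let lo, hi : Fin n → ℝ with lo ≤ hi componentwise, and set I := Set.Icc lo hi. Let J_lo, J_hi be n × n real matrices such that for every x ∈ I and all indices i, j, the (i,j) entry of the Jacobian matrix of F at x lies in [J_lo i j, J_hi i j]. Let x₀ ∈ I and let Y be an invertible n × n real matrix. Suppose that for every y ∈ I and every n × n matrix A with J_lo i j ≤ A i j ≤ J_hi i j for all i, j, the point x₀ − Y *ᵥ (F x₀) + (1 − Y * A) *ᵥ (y − x₀) lies in I (here 1 is the identity matrix, * is matrix multiplication and *ᵥ is matrix–vector multiplication). Then there exists x ∈ I with F x = 0. -/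
import Mathlib

open Set

lemma krawczyk_slope (n : ℕ) (F : (Fin n → ℝ) → (Fin n → ℝ)) (hF : Differentiable ℝ F)
    (lo hi : Fin n → ℝ)
    (Jlo Jhi : Matrix (Fin n) (Fin n) ℝ)
    (hJ : ∀ x ∈ Set.Icc lo hi, ∀ (i : Fin n) (j : Fin n),
      fderiv ℝ F x (Pi.single j 1) i ∈ Set.Icc (Jlo i j) (Jhi i j))
    (y z : Fin n → ℝ) (hy : y ∈ Set.Icc lo hi) (hz : z ∈ Set.Icc lo hi) :
    ∃ A : Matrix (Fin n) (Fin n) ℝ,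
      (∀ (i : Fin n) (j : Fin n), Jlo i j ≤ A i j ∧ A i j ≤ Jhi i j) ∧
      A.mulVec (z - y) = F z - F y := by
  have hy' := Set.mem_Icc.mp hy
  have hz' := Set.mem_Icc.mp hz
  -- derivative of t ↦ F (y + t • (z - y))
  have hγ : ∀ t : ℝ, HasDerivAt (fun s : ℝ => y + s • (z - y)) (z - y) t := by
    intro t
    simpa using ((hasDerivAt_id t).smul_const (z - y)).const_add y
  have hFγ : ∀ t : ℝ, HasDerivAt (fun s : ℝ => F (y + s • (z - y)))
      (fderiv ℝ F (y + t • (z - y)) (z - y)) t := by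
    intro t
    exact ((hF (y + t • (z - y))).hasFDerivAt).comp_hasDerivAt t (hγ t)
  have hmem : ∀ t ∈ Set.Icc (0:ℝ) 1, y + t • (z - y) ∈ Set.Icc lo hi := by
    intro t ht
    constructor <;> intro j <;>
    · have h1 := (hy'.1) j
      have h2 := (hy'.2) j
      have h3 := (hz'.1) j
      have h4 := (hz'.2) j
      have : (y + t • (z - y)) j = y j + t * (z j - y j) := by
        simp [Pi.smul_apply]
      rw [this]
      nlinarith [ht.1, ht.2]
  -- MVT per component
  have key : ∀ i : Fin n, ∃ t ∈ Set.Ioo (0:ℝ) 1,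
      fderiv ℝ F (y + t • (z - y)) (z - y) i = F z i - F y i := by
    intro i
    have hdi : ∀ t : ℝ, HasDerivAt (fun s : ℝ => F (y + s • (z - y)) i)
        (fderiv ℝ F (y + t • (z - y)) (z - y) i) t := by
      intro t
      exact hasDerivAt_pi.mp (hFγ t) i
    have hcont : ContinuousOn (fun s : ℝ => F (y + s • (z - y)) i) (Set.Icc 0 1) :=
      (continuous_iff_continuousAt.mpr fun t => (hdi t).continuousAt).continuousOn
    obtain ⟨c, hc, hceq⟩ := exists_hasDerivAt_eq_slope
      (fun s : ℝ => F (y + s • (z - y)) i)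
      (fun t => fderiv ℝ F (y + t • (z - y)) (z - y) i)
      one_pos hcont (fun t _ => hdi t)
    refine ⟨c, hc, ?_⟩
    rw [hceq]
    simp
  choose c hc hceq using key
  refine ⟨Matrix.of (fun i j => fderiv ℝ F (y + c i • (z - y)) (Pi.single j 1) i), ?_, ?_⟩
  · intro i j
    have := hJ (y + c i • (z - y)) (hmem (c i) ⟨(hc i).1.le, (hc i).2.le⟩) i j
    exact ⟨this.1, this.2⟩
  · funext i
    have expand : (z - y) = ∑ j, (z - y) j • (Pi.single j 1 : Fin n → ℝ) := by
      funext k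
      rw [Finset.sum_apply]
      simp [Pi.single_apply]
    have key2 : ∀ (L : (Fin n → ℝ) →L[ℝ] (Fin n → ℝ)),
        L (z - y) i = ∑ j, (z - y) j * L (Pi.single j 1) i := by
      intro L
      conv_lhs => rw [expand]
      rw [map_sum, Finset.sum_apply]
      simp
    have h2 := hceq i
    rw [key2 (fderiv ℝ F (y + c i • (z - y)))] at h2
    simp only [Matrix.mulVec, dotProduct, Matrix.of_apply, Pi.sub_apply]
    rw [← h2]
    apply Finset.sum_congr rfl
    intro j _
    simp [Pi.sub_apply]
    ring


lemma krawczyk_row_bound (n : ℕ) (F : (Fin n → ℝ) → (Fin n → ℝ))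
    (lo hi : Fin n → ℝ) (hlohi : lo ≤ hi)
    (Jlo Jhi : Matrix (Fin n) (Fin n) ℝ)
    (x₀ : Fin n → ℝ)
    (Y : Matrix (Fin n) (Fin n) ℝ)
    (hK : ∀ y ∈ Set.Icc lo hi, ∀ A : Matrix (Fin n) (Fin n) ℝ,
      (∀ (i : Fin n) (j : Fin n), Jlo i j ≤ A i j ∧ A i j ≤ Jhi i j) →
      x₀ - Y.mulVec (F x₀) + (1 - Y * A).mulVec (y - x₀) ∈ Set.Icc lo hi)
    (A : Matrix (Fin n) (Fin n) ℝ)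
    (hA : ∀ (i : Fin n) (j : Fin n), Jlo i j ≤ A i j ∧ A i j ≤ Jhi i j)
    (i : Fin n) :
    ∑ j, |(1 - Y * A) i j| * (hi j - lo j) ≤ hi i - lo i := by
  set M := 1 - Y * A with hM
  set yp : Fin n → ℝ := fun j => if 0 ≤ M i j then hi j else lo j with hyp
  set ym : Fin n → ℝ := fun j => if 0 ≤ M i j then lo j else hi j with hym
  have hypI : yp ∈ Set.Icc lo hi := by
    constructor <;> intro j <;> simp only [hyp] <;> split <;>
      first | exact le_rfl | exact hlohi j
  have hymI : ym ∈ Set.Icc lo hi := by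
    constructor <;> intro j <;> simp only [hym] <;> split <;>
      first | exact le_rfl | exact hlohi j
  have h1 := ((hK yp hypI A hA).2) i
  have h2 := ((hK ym hymI A hA).1) i
  simp only [Pi.add_apply, Pi.sub_apply] at h1 h2
  have key : (M.mulVec (yp - x₀)) i - (M.mulVec (ym - x₀)) i
      = ∑ j, |M i j| * (hi j - lo j) := by
    simp only [Matrix.mulVec, dotProduct, Pi.sub_apply]
    rw [← Finset.sum_sub_distrib]
    apply Finset.sum_congr rfl
    intro j _
    rcases le_or_gt 0 (M i j) with h | h
    · rw [abs_of_nonneg h]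
      simp only [hyp, hym, if_pos h]
      ring
    · rw [abs_of_neg h]
      simp only [hyp, hym, if_neg (not_le.mpr h)]
      ring
  linarith

/-- Krawczyk operator: existence of a zero. -/
theorem krawczyk_existence (n : ℕ)
    (F : (Fin n → ℝ) → (Fin n → ℝ)) (hF : Differentiable ℝ F)
    (lo hi : Fin n → ℝ) (hlohi : lo ≤ hi)
    (Jlo Jhi : Matrix (Fin n) (Fin n) ℝ)
    (hJ : ∀ x ∈ Set.Icc lo hi, ∀ (i : Fin n) (j : Fin n),
      fderiv ℝ F x (Pi.single j 1) i ∈ Set.Icc (Jlo i j) (Jhi i j))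
    (x₀ : Fin n → ℝ) (hx₀ : x₀ ∈ Set.Icc lo hi)
    (Y : Matrix (Fin n) (Fin n) ℝ) (hY : IsUnit Y)
    (hK : ∀ y ∈ Set.Icc lo hi, ∀ A : Matrix (Fin n) (Fin n) ℝ,
      (∀ (i : Fin n) (j : Fin n), Jlo i j ≤ A i j ∧ A i j ≤ Jhi i j) →
      x₀ - Y.mulVec (F x₀) + (1 - Y * A).mulVec (y - x₀) ∈ Set.Icc lo hi) :
    ∃ x ∈ Set.Icc lo hi, F x = 0 := by
  classical
  set Φ : (Fin n → ℝ) → (Fin n → ℝ) := fun y => y - Y.mulVec (F y) with hΦ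
  have slope := krawczyk_slope n F hF lo hi Jlo Jhi hJ
  have rowb := krawczyk_row_bound n F lo hi hlohi Jlo Jhi x₀ Y hK
  -- Φ maps the box into itself
  have hΦI : ∀ y ∈ Set.Icc lo hi, Φ y ∈ Set.Icc lo hi := by
    intro y hy
    obtain ⟨A, hA, hAv⟩ := slope x₀ y hx₀ hy
    have hmem := hK y hy A hA
    have heq : x₀ - Y.mulVec (F x₀) + (1 - Y * A).mulVec (y - x₀) = Φ y := by
      rw [Matrix.sub_mulVec, Matrix.one_mulVec, ← Matrix.mulVec_mulVec, hAv,
        Matrix.mulVec_sub]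
      simp only [hΦ]
      abel
    rwa [heq] at hmem
  -- componentwise Lipschitz-type bound
  have hLip : ∀ y ∈ Set.Icc lo hi, ∀ z ∈ Set.Icc lo hi, ∀ t : ℝ, 0 ≤ t →
      (∀ j, |z j - y j| ≤ t * (hi j - lo j)) →
      ∀ i, |Φ z i - Φ y i| ≤ t * (hi i - lo i) := by
    intro y hy z hz t ht hzy i
    obtain ⟨A, hA, hAv⟩ := slope y z hy hz
    have heq : Φ z - Φ y = (1 - Y * A).mulVec (z - y) := by
      rw [Matrix.sub_mulVec, Matrix.one_mulVec, ← Matrix.mulVec_mulVec, hAv,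
        Matrix.mulVec_sub]
      simp only [hΦ]
      abel
    have heqi : Φ z i - Φ y i = ∑ j, (1 - Y * A) i j * (z j - y j) := by
      have h := congrFun heq i
      simp only [Pi.sub_apply] at h
      rw [h]
      simp [Matrix.mulVec, dotProduct]
    rw [heqi]
    calc |∑ j, (1 - Y * A) i j * (z j - y j)|
        ≤ ∑ j, |(1 - Y * A) i j * (z j - y j)| := Finset.abs_sum_le_sum_abs _ _
      _ ≤ ∑ j, |(1 - Y * A) i j| * (t * (hi j - lo j)) := by
          apply Finset.sum_le_sum
          intro j _
          rw [abs_mul]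
          exact mul_le_mul_of_nonneg_left (hzy j) (abs_nonneg _)
      _ = t * ∑ j, |(1 - Y * A) i j| * (hi j - lo j) := by
          rw [Finset.mul_sum]
          apply Finset.sum_congr rfl
          intro j _
          ring
      _ ≤ t * (hi i - lo i) := mul_le_mul_of_nonneg_left (rowb A hA i) ht
  -- midpoint
  set m : Fin n → ℝ := fun i => (lo i + hi i) / 2 with hm
  have hmI : m ∈ Set.Icc lo hi := by
    constructor <;> intro i <;>
    · have := hlohi i
      show _ ≤ _
      simp only [hm]
      linarith
  -- continuity of the distance function
  have hΦc : Continuous Φ := by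
    apply continuous_id.sub
    exact continuous_const.matrix_mulVec hF.continuous
  have hg : Continuous fun y => dist (Φ y) y := hΦc.dist continuous_id
  obtain ⟨w, hwI, hwmin⟩ := isCompact_Icc.exists_isMinOn ⟨x₀, hx₀⟩ hg.continuousOn
  set S := dist lo hi with hS
  have hS0 : (0:ℝ) ≤ S := dist_nonneg
  have hsS : ∀ j, hi j - lo j ≤ S := by
    intro j
    have h := dist_le_pi_dist lo hi j
    rw [Real.dist_eq, abs_sub_comm, abs_of_nonneg (sub_nonneg.mpr (hlohi j))] at h
    exact h
  have main : ∀ ε : ℝ, 0 < ε → dist (Φ w) w ≤ ε := by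
    intro ε hε
    set θ := min 1 (ε / (2 * (S + 1))) with hθdef
    have hd0 : (0:ℝ) < ε / (2 * (S + 1)) := div_pos hε (by linarith)
    have hθ0 : 0 < θ := lt_min one_pos hd0
    have hθ1 : θ ≤ 1 := min_le_left _ _
    have hθle : θ ≤ ε / (2 * (S + 1)) := min_le_right _ _
    -- iteration sequence
    let zseq : ℕ → (Fin n → ℝ) := fun k =>
      Nat.rec m (fun _ w' => fun i => m i + (1 - θ) * (Φ w' i - m i)) k
    have zseq_succ : ∀ k i, zseq (k + 1) i = m i + (1 - θ) * (Φ (zseq k) i - m i) :=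
      fun _ _ => rfl
    have hzI : ∀ k, zseq k ∈ Set.Icc lo hi := by
      intro k
      induction k with
      | zero => exact hmI
      | succ k ih =>
        have hφ := hΦI _ ih
        constructor <;> intro i <;>
        · have h1 := hφ.1 i
          have h2 := hφ.2 i
          have h3 := hmI.1 i
          have h4 := hmI.2 i
          have h5 := hmI.1 i
          show _ ≤ _
          rw [zseq_succ]
          nlinarith
    have hdiff : ∀ k, ∀ j, |zseq (k + 1) j - zseq k j| ≤ (1 - θ) ^ k * (hi j - lo j) := by
      intro k
      induction k with
      | zero =>
        intro j
        rw [pow_zero, one_mul]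
        have hφ := hΦI (zseq 0) (hzI 0)
        have h1 := hφ.1 j
        have h2 := hφ.2 j
        have h3 := hmI.1 j
        have h4 := hmI.2 j
        have hj := hlohi j
        rw [zseq_succ]
        show |m j + (1 - θ) * (Φ (zseq 0) j - m j) - m j| ≤ hi j - lo j
        rw [abs_le]
        constructor <;> nlinarith
      | succ k ih =>
        intro j
        have e1 : zseq (k + 2) j - zseq (k + 1) j
            = (1 - θ) * (Φ (zseq (k + 1)) j - Φ (zseq k) j) := by
          rw [zseq_succ (k + 1) j, zseq_succ k j]
          ring
        rw [e1, abs_mul, abs_of_nonneg (by linarith : (0:ℝ) ≤ 1 - θ)]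
        have hL := hLip (zseq k) (hzI k) (zseq (k + 1)) (hzI (k + 1)) ((1 - θ) ^ k)
          (pow_nonneg (by linarith) k) ih j
        calc (1 - θ) * |Φ (zseq (k + 1)) j - Φ (zseq k) j|
            ≤ (1 - θ) * ((1 - θ) ^ k * (hi j - lo j)) :=
              mul_le_mul_of_nonneg_left hL (by linarith)
          _ = (1 - θ) ^ (k + 1) * (hi j - lo j) := by ring
    obtain ⟨k, hk⟩ := exists_pow_lt_of_lt_one hd0 (show 1 - θ < 1 by linarith)
    have hb : dist (Φ (zseq k)) (zseq k) ≤ ε := by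
      rw [dist_pi_le_iff hε.le]
      intro i
      rw [Real.dist_eq]
      have hφ := hΦI _ (hzI k)
      have h2 : |Φ (zseq k) i - zseq (k + 1) i| ≤ θ * (hi i - lo i) := by
        rw [zseq_succ]
        have h1 := hφ.1 i
        have h2' := hφ.2 i
        have h3 := hmI.1 i
        have h4 := hmI.2 i
        rw [abs_le]
        constructor <;> nlinarith
      have h3 := hdiff k i
      have hsi := hsS i
      have hsi0 : (0:ℝ) ≤ hi i - lo i := sub_nonneg.mpr (hlohi i)
      have habs : |Φ (zseq k) i - zseq k i|
          ≤ |Φ (zseq k) i - zseq (k + 1) i| + |zseq (k + 1) i - zseq k i| := by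
        have : Φ (zseq k) i - zseq k i
            = (Φ (zseq k) i - zseq (k + 1) i) + (zseq (k + 1) i - zseq k i) := by ring
        rw [this]
        exact abs_add_le _ _
      have p1 : θ * (hi i - lo i) ≤ ε / (2 * (S + 1)) * S := by
        apply mul_le_mul hθle (le_trans hsi le_rfl) hsi0 hd0.le
      have p2 : (1 - θ) ^ k * (hi i - lo i) ≤ ε / (2 * (S + 1)) * S := by
        apply mul_le_mul hk.le hsi hsi0 hd0.le
      have p3 : ε / (2 * (S + 1)) * S ≤ ε / 2 := by
        rw [div_mul_eq_mul_div, div_le_div_iff₀ (by linarith) (by norm_num)]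
        nlinarith
      linarith
    calc dist (Φ w) w ≤ dist (Φ (zseq k)) (zseq k) := hwmin (hzI k)
      _ ≤ ε := hb
  have hzero : dist (Φ w) w = 0 := by
    have hle : dist (Φ w) w ≤ 0 := by
      by_contra hcon
      push_neg at hcon
      have := main (dist (Φ w) w / 2) (by linarith)
      linarith
    exact le_antisymm hle dist_nonneg
  have hfix : Φ w = w := by rwa [dist_eq_zero] at hzero
  have hYF : Y.mulVec (F w) = 0 := sub_eq_self.mp hfix
  refine ⟨w, hwI, ?_⟩
  have h1 : ((hY.unit⁻¹ : (Matrix (Fin n) (Fin n) ℝ)ˣ) : Matrix (Fin n) (Fin n) ℝ).mulVec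
      (Y.mulVec (F w)) = F w := by
    rw [Matrix.mulVec_mulVec, IsUnit.val_inv_mul, Matrix.one_mulVec]
  rw [hYF, Matrix.mulVec_zero] at h1
  exact h1.symm
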